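/- arXiv:1510.08124 — 2 statements merged into one kernel-verified Lean document; each statement's English description precedes it below -/
import Mathlib

section
/- Let R(z) = ∑_{i=1}^{d} a_i/(z − p_i) be a d-good rational function with lemniscate K := {z ∈ Ĉ : |R(z)| ≥ 1}. Then the logarithmic capacity satisfies cap(K) ≥ [∏_{i≠j} |p_i − p_j| · ∏_{i=1}^{d} |a_i|]^{1/d²}, where the first product is over all ordered pairs (i,j) with i ≠ j, 1 ≤ i, j ≤ d. -/
open MeasureTheory Metric Complex Set Topology Filter OnePoint
open scoped Classical

noncomputable section

/-- The Riemann sphere, modeled as the one-point compactification of `ℂ`. -/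
abbrev RS : Type := OnePoint ℂ

instance : MeasurableSpace RS := borel RS
instance : BorelSpace RS := ⟨rfl⟩

/-- The finite part of a point of the Riemann sphere (junk value `0` at `∞`). -/
def sphToC (z : RS) : ℂ := if h : ∃ x : ℂ, (x : RS) = z then h.choose else 0

/-- The inversion `z ↦ 1/z` on the Riemann sphere. -/
def sphInv (z : RS) : RS :=
  if z = (∞ : RS) then ((0 : ℂ) : RS)
  else if sphToC z = 0 then (∞ : RS) else (((sphToC z)⁻¹ : ℂ) : RS)

/-- Mean-value-property definition of harmonicity on a planar set. -/
def HarmonicOnC (h : ℂ → ℝ) (D : Set ℂ) : Prop :=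
  ContinuousOn h D ∧ ∀ z ∈ D, ∀ r : ℝ, 0 < r → closedBall z r ⊆ D →
    h z = (2 * Real.pi)⁻¹ *
      ∫ θ in (0:ℝ)..(2 * Real.pi), h (z + (r : ℂ) * Complex.exp ((θ : ℂ) * Complex.I))

/-- Harmonicity on a subset of the Riemann sphere, via the two standard charts. -/
def HarmonicOnS (h : RS → ℝ) (D : Set RS) : Prop :=
  HarmonicOnC (fun x : ℂ => h (x : RS)) {x : ℂ | (x : RS) ∈ D} ∧
  HarmonicOnC (fun x : ℂ => h (sphInv (x : RS))) {x : ℂ | sphInv (x : RS) ∈ D}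

/-- `ω` is the harmonic measure of `D ⊆ Ĉ` at `a` (for disconnected `D`, the harmonic
measure of the component of `D` containing `a`). -/
def IsHarmonicMeasureS (D : Set RS) (a : RS) (ω : Measure RS) : Prop :=
  a ∈ D ∧ IsProbabilityMeasure ω ∧ ω ((frontier D)ᶜ) = 0 ∧
  ∀ h : RS → ℝ, HarmonicOnS h D → ContinuousOn h (closure D) →
    ∫ x, h x ∂ω = h a

/-- `ω` is the harmonic measure of the planar domain `D` at `a`. -/
def IsHarmonicMeasureC (D : Set ℂ) (a : ℂ) (ω : Measure ℂ) : Prop :=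
  a ∈ D ∧ IsProbabilityMeasure ω ∧ ω ((frontier D)ᶜ) = 0 ∧
  ∀ h : ℂ → ℝ, HarmonicOnC h D → ContinuousOn h (closure D) →
    ∫ x, h x ∂ω = h a

/-- The logarithmic kernel `log (1/|z-w|)`. -/
def logKer (z w : ℂ) : ℝ := Real.log (1 / dist z w)

/-- Mutual logarithmic energy `∬ log (1/|z-w|) dμ(z) dν(w)` as an extended real number. -/
def mutualEnergy (μ ν : Measure ℂ) : EReal :=
  ENNReal.toEReal (∫⁻ q : ℂ × ℂ, ENNReal.ofReal (logKer q.1 q.2) ∂(μ.prod ν)) -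
  ENNReal.toEReal (∫⁻ q : ℂ × ℂ, ENNReal.ofReal (-(logKer q.1 q.2)) ∂(μ.prod ν))

/-- Logarithmic energy of a measure. -/
def energyI (μ : Measure ℂ) : EReal := mutualEnergy μ μ

/-- Equilibrium energy of a set: infimum of the energies of Borel probability
measures supported on it. -/
def eqEnergy (K : Set ℂ) : EReal :=
  ⨅ (μ : Measure ℂ) (_ : IsProbabilityMeasure μ) (_ : μ Kᶜ = 0), energyI μ

/-- Logarithmic capacity `cap K = e^{-I(K)}`. -/
def logCap (K : Set ℂ) : ℝ :=
  if eqEnergy K = ⊤ then 0 else Real.exp (-(eqEnergy K).toReal)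

/-- The rational function `z ↦ ∑ i, a i / (z - p i)`. -/
def ratSum {d : ℕ} (a p : Fin d → ℂ) (z : ℂ) : ℂ := ∑ i, a i / (z - p i)

/-- Riemann-sphere-valued evaluation of `ratSum` (value `∞` at the poles). -/
def ratSumS {d : ℕ} (a p : Fin d → ℂ) (z : ℂ) : RS :=
  if z ∈ Set.range p then (∞ : RS) else ((ratSum a p z : ℂ) : RS)

/-- The lemniscate `{z ∈ ℂ : |R(z)| ≥ t}` of `R = ∑ a i / (z - p i)`;
the poles belong to it. -/
def lemniscate {d : ℕ} (a p : Fin d → ℂ) (t : ℝ) : Set ℂ :=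
  {z : ℂ | z ∈ Set.range p ∨ t ≤ ‖ratSum a p z‖}

/-- `Ω = R⁻¹(𝔻) ⊆ Ĉ` for `R = ∑ a i / (z - p i)` (it contains `∞` since `R(∞)=0`). -/
def ratSumDomain {d : ℕ} (a p : Fin d → ℂ) : Set RS :=
  {(∞ : RS)} ∪ (fun x : ℂ => (x : RS)) ''
    {z : ℂ | z ∉ Set.range p ∧ ‖ratSum a p z‖ < 1}

/-- An analytic Jordan curve: the image of the unit circle under an injective
analytic map with non-vanishing derivative, defined near the circle. -/
def IsAnalyticJordanCurve (J : Set ℂ) : Prop :=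
  ∃ (U : Set ℂ) (f : ℂ → ℂ), IsOpen U ∧ sphere (0:ℂ) 1 ⊆ U ∧ AnalyticOnNhd ℂ f U ∧
    Set.InjOn f (sphere (0:ℂ) 1) ∧ (∀ z ∈ sphere (0:ℂ) 1, deriv f z ≠ 0) ∧
    f '' sphere (0:ℂ) 1 = J

/-- A (topological) Jordan curve. -/
def IsJordanCurve (J : Set ℂ) : Prop :=
  ∃ f : ℂ → ℂ, ContinuousOn f (sphere (0:ℂ) 1) ∧ Set.InjOn f (sphere (0:ℂ) 1) ∧
    f '' sphere (0:ℂ) 1 = J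

/-- A bounded Jordan domain. -/
def IsJordanDomain (D : Set ℂ) : Prop :=
  IsOpen D ∧ IsConnected D ∧ Bornology.IsBounded D ∧ IsJordanCurve (frontier D)

/-- `R = ∑ a i / (z - p i)` is a `d`-good rational function: it has degree `d`
(the residues are nonzero and the poles are distinct), `R(∞) = 0`, and
`Ω = R⁻¹(𝔻)` is connected and bounded by `d` disjoint analytic Jordan curves,
the `i`-th of which surrounds the pole `p i`. -/
structure IsGoodRat (d : ℕ) (a p : Fin d → ℂ) : Prop where
  residue_ne : ∀ i, a i ≠ 0
  poles_inj : Function.Injective p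
  conn : IsConnected (ratSumDomain a p)
  curves : ∃ γ : Fin d → Set ℂ, (∀ i, IsAnalyticJordanCurve (γ i)) ∧
    (Pairwise fun i j => Disjoint (γ i) (γ j)) ∧
    frontier (ratSumDomain a p) = (fun x : ℂ => (x : RS)) '' ⋃ i, γ i ∧
    ∀ i, p i ∉ γ i ∧ Bornology.IsBounded (connectedComponentIn ((γ i)ᶜ) (p i))

/-- Evaluation of the rational function `P/Q` on the Riemann sphere. -/
def ratEval (P Q : Polynomial ℂ) : RS → RS := fun z =>
  if z = (∞ : RS) then
    (if Q.natDegree < P.natDegree then (∞ : RS)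
     else ((P.coeff Q.natDegree / Q.leadingCoeff : ℂ) : RS))
  else
    (if Q.eval (sphToC z) = 0 then (∞ : RS)
     else ((P.eval (sphToC z) / Q.eval (sphToC z) : ℂ) : RS))

/-- `g` has a zero of exact order `m` at `x`. -/
def HasZeroOrderAt (g : ℂ → ℂ) (x : ℂ) (m : ℕ) : Prop :=
  ∃ c : ℂ, c ≠ 0 ∧ Filter.Tendsto (fun y : ℂ => g y / (y - x) ^ m) (𝓝[≠] x) (𝓝 c)

/-- `f : Ĉ → ℂ` has a zero of exact order `m` at `z ∈ Ĉ`. -/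
def ZeroOrderAtS (f : RS → ℂ) (z : RS) (m : ℕ) : Prop :=
  (z = (∞ : RS) → HasZeroOrderAt (fun x : ℂ => f (sphInv (x : RS))) 0 m) ∧
  ∀ x : ℂ, z = (x : RS) → HasZeroOrderAt (fun y : ℂ => f (y : RS)) x m

/-- Holomorphy on a subset of the Riemann sphere (in both charts). -/
def HolomorphicOnS (f : RS → ℂ) (D : Set RS) : Prop :=
  DifferentiableOn ℂ (fun x : ℂ => f (x : RS)) {x : ℂ | (x : RS) ∈ D} ∧
  DifferentiableOn ℂ (fun x : ℂ => f (sphInv (x : RS))) {x : ℂ | sphInv (x : RS) ∈ D}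

/-- `f` is a proper map from `D` into the open unit disc. -/
def IsProperToDisc (f : RS → ℂ) (D : Set RS) : Prop :=
  Set.MapsTo f D (ball (0:ℂ) 1) ∧
  ∀ L : Set ℂ, L ⊆ ball (0:ℂ) 1 → IsCompact L → IsCompact {z ∈ D | f z ∈ L}

/-- `G` is the Green function of `D ⊆ Ĉ` with pole at `∞` (extended by `0` off `D`):
it is positive and harmonic on `D ∖ {∞}`, `G(z) - log|z|` has a finite limit at `∞`,
and `G` tends to `0` at every boundary point. -/
def IsGreenPoleInf (D : Set RS) (G : RS → ℝ) : Prop :=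
  (∞ : RS) ∈ D ∧
  HarmonicOnS G (D \ {(∞ : RS)}) ∧
  (∀ z ∈ D, z ≠ (∞ : RS) → 0 < G z) ∧
  (∀ z ∉ D, G z = 0) ∧
  (∀ w ∈ frontier D, Filter.Tendsto G (𝓝[D] w) (𝓝 0)) ∧
  ∃ L : ℝ, Filter.Tendsto (fun x : ℂ => G (x : RS) - Real.log (‖x‖))
    (Bornology.cobounded ℂ) (𝓝 L)

end


/-!
For `n ≥ 1` and `|u| = 1`, the `n d` roots of `H = u Q^n - P^n`, where `R = P / Q`, lie on the
level curve `|R| = 1`, hence in `K`. Since `logKer` takes the value `log (1/0) = 0` on the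
diagonal, the uniform measure on these roots has energy `-(n d)⁻² log ∏_{z ≠ w} |z - w|`, an upper
bound for `I(K)`. The product `∏_{z ≠ w} |z - w| = ∏ |H'(z)|` is computed with resultants: at a root
of `H`, `P Q H' = n u Q^n W` for the Wronskian `W = P Q' - P' Q`, and `|Res(Q, H)| = |Res(Q, P)|^n`,
`|Res(P, H)| = |Res(P, Q)|^n`, while `|Res(W, H)| ≥ |Res(W, Q)|^n r^k` as soon as `u` stays at
distance `r` from the `k` values `R(τ)^n`, `W(τ) = 0`; such a `u` exists among the `(k+1)`-st roots
of unity, with `r` independent of `n`. Hence `∏_{z ≠ w} |z - w| ≥ |Res(Q, P)|^{n²} κ^n`, so in the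
limit `I(K) ≤ -log |Res(Q, P)| / d²`, where
`|Res(Q, P)| = ∏ |P(p_i)| = ∏_{i ≠ j} |p_i - p_j| ∏ |a_i|`.
-/

open scoped ENNReal

theorem exists_pos_le_dist_of_ne {X : Type*} [MetricSpace X] (F : Finset X) :
    ∃ ε > 0, ∀ x ∈ F, ∀ y ∈ F, x ≠ y → ε ≤ dist x y := by
  rcases F.offDiag.eq_empty_or_nonempty with h | h
  · refine ⟨1, one_pos, fun x hx y hy hxy => ?_⟩
    simpa [h] using (Finset.mem_offDiag (x := (x, y))).2 ⟨hx, hy, hxy⟩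
  · obtain ⟨q, hq, hmin⟩ := F.offDiag.exists_min_image (fun q => dist q.1 q.2) h
    exact ⟨_, dist_pos.2 (Finset.mem_offDiag.1 hq).2.2,
      fun x hx y hy hxy => hmin (x, y) (Finset.mem_offDiag.2 ⟨hx, hy, hxy⟩)⟩

theorem exists_pos_forall_exists_mem_le_dist {X : Type*} [MetricSpace X] (F : Finset X) :
    ∃ r > 0, ∀ s : Finset X, s.card < F.card → ∃ x ∈ F, ∀ c ∈ s, r ≤ dist x c := by
  obtain ⟨ε, hε, hsep⟩ := exists_pos_le_dist_of_ne F
  refine ⟨ε / 2, by positivity, fun s hs => ?_⟩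
  by_contra! hnear
  obtain ⟨x₀, -⟩ := Finset.card_pos.1 (hs.trans_le' (Nat.zero_le _))
  have : Nonempty X := ⟨x₀⟩
  choose! f hfs hfdist using hnear
  -- pigeonhole: two points of `F` are near the same point of `s`, hence closer than `ε`
  obtain ⟨x, hx, y, hy, hxy, hfxy⟩ := Finset.exists_ne_map_eq_of_card_lt_of_maps_to hs hfs
  have := dist_triangle_right x y (f x)
  linarith [hsep x hx y hy hxy, hfdist x hx, hfdist y hy, hfxy ▸ hfdist y hy]

theorem exists_pos_forall_exists_norm_eq_one_le_dist (k : ℕ) :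
    ∃ r > 0, ∀ s : Finset ℂ, s.card ≤ k → ∃ u : ℂ, ‖u‖ = 1 ∧ ∀ c ∈ s, r ≤ dist u c := by
  have hk : 0 < k + 1 := k.succ_pos
  obtain ⟨r, hr, hfar⟩ :=
    exists_pos_forall_exists_mem_le_dist (Polynomial.nthRootsFinset (k + 1) (1 : ℂ))
  refine ⟨r, hr, fun s hs => ?_⟩
  have hcard := (Complex.isPrimitiveRoot_exp (k + 1) hk.ne').card_nthRootsFinset
  obtain ⟨u, hu, hus⟩ := hfar s (by omega)
  exact ⟨u, Complex.norm_eq_one_of_pow_eq_one ((Polynomial.mem_nthRootsFinset hk 1).1 hu) hk.ne',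
    hus⟩

theorem norm_multiset_prod {α : Type*} [SeminormedCommRing α] [NormOneClass α] [NormMulClass α]
    (m : Multiset α) : ‖m.prod‖ = (m.map (‖·‖)).prod :=
  map_multiset_prod normHom m

noncomputable def pairwiseDistProd (m : Multiset ℂ) : ℝ :=
  (m.map fun z => ((m.erase z).map fun w => ‖z - w‖).prod).prod

theorem Multiset.nodup_of_pairwiseDistProd_ne_zero {m : Multiset ℂ}
    (h : pairwiseDistProd m ≠ 0) : m.Nodup := by
  rw [Multiset.nodup_iff_count_le_one]
  by_contra! hdup
  obtain ⟨a, ha⟩ := hdup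
  have hmem : a ∈ m.erase a := Multiset.count_pos.1 (by rw [Multiset.count_erase_self]; omega)
  exact h (Multiset.prod_eq_zero (Multiset.mem_map.2 ⟨a, Multiset.count_pos.1 (by omega),
    Multiset.prod_eq_zero (Multiset.mem_map.2 ⟨a, hmem, by simp⟩)⟩))

noncomputable def uniformMeasure {α : Type*} [MeasurableSpace α] (S : Finset α) : Measure α :=
  (S.card : ℝ≥0∞)⁻¹ • ∑ x ∈ S, Measure.dirac x

section uniformMeasure

variable {α : Type*} [MeasurableSpace α] (S : Finset α)

theorem isProbabilityMeasure_uniformMeasure (hS : S.Nonempty) :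
    IsProbabilityMeasure (uniformMeasure S) :=
  ⟨by simp [uniformMeasure, ENNReal.inv_mul_cancel, hS.ne_empty]⟩

theorem uniformMeasure_compl_eq_zero [MeasurableSingletonClass α] {K : Set α} (hSK : ↑S ⊆ K) :
    uniformMeasure S Kᶜ = 0 := by
  simp only [uniformMeasure, Measure.smul_apply, Measure.coe_finsetSum, Finset.sum_apply,
    Measure.dirac_apply]
  rw [Finset.sum_eq_zero fun x hx => Set.indicator_of_notMem (not_not_intro (hSK hx)) _, smul_zero]

theorem lintegral_uniformMeasure [MeasurableSingletonClass α] (f : α → ℝ≥0∞) :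
    ∫⁻ x, f x ∂uniformMeasure S = (S.card : ℝ≥0∞)⁻¹ * ∑ x ∈ S, f x := by
  simp [uniformMeasure]

end uniformMeasure

section energy

open Finset

theorem logKer_eq_neg_log_dist (z w : ℂ) : logKer z w = -Real.log (dist z w) := by
  rw [logKer, one_div, Real.log_inv]

theorem measurable_logKer : Measurable fun q : ℂ × ℂ => logKer q.1 q.2 := by
  simp_rw [logKer_eq_neg_log_dist]
  exact (Real.measurable_log.comp measurable_dist).neg

theorem energyI_uniformMeasure {S : Finset ℂ} (hS : S.Nonempty) :
    energyI (uniformMeasure S) =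
      (((#S : ℝ)⁻¹ ^ 2 * ∑ z ∈ S, ∑ w ∈ S, logKer z w : ℝ) : EReal) := by
  have := isProbabilityMeasure_uniformMeasure S hS
  have hlint : ∀ g : ℂ → ℂ → ℝ, Measurable (fun q : ℂ × ℂ => g q.1 q.2) →
      ∫⁻ q, ENNReal.ofReal (g q.1 q.2) ∂(uniformMeasure S).prod (uniformMeasure S) =
        (#S : ℝ≥0∞)⁻¹ ^ 2 * ∑ z ∈ S, ∑ w ∈ S, ENNReal.ofReal (g z w) := by
    intro g hg
    rw [lintegral_prod (fun q => ENNReal.ofReal (g q.1 q.2))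
      (ENNReal.measurable_ofReal.comp hg).aemeasurable]
    simp only [lintegral_uniformMeasure, mul_sum, sq, mul_assoc]
  have hfin : ∀ g : ℂ → ℂ → ℝ,
      (#S : ℝ≥0∞)⁻¹ ^ 2 * ∑ z ∈ S, ∑ w ∈ S, ENNReal.ofReal (g z w) ≠ ⊤ := fun g =>
    ENNReal.mul_ne_top (ENNReal.pow_ne_top (by simpa using hS.ne_empty))
      (ENNReal.sum_ne_top.2 fun _ _ => ENNReal.sum_ne_top.2 fun _ _ => ENNReal.ofReal_ne_top)
  rw [energyI, mutualEnergy, hlint _ measurable_logKer,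
    hlint (fun z w => -logKer z w) measurable_logKer.neg,
    ← EReal.coe_ennreal_toReal (hfin _), ← EReal.coe_ennreal_toReal (hfin _),
    ← EReal.coe_sub, EReal.coe_eq_coe_iff, ENNReal.toReal_mul, ENNReal.toReal_mul, ← mul_sub]
  simp only [ENNReal.toReal_pow, ENNReal.toReal_inv, ENNReal.toReal_natCast]
  rw [ENNReal.toReal_sum fun _ _ => ENNReal.sum_ne_top.2 fun _ _ => ENNReal.ofReal_ne_top,
    ENNReal.toReal_sum fun _ _ => ENNReal.sum_ne_top.2 fun _ _ => ENNReal.ofReal_ne_top,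
    ← sum_sub_distrib]
  congr 1
  refine sum_congr rfl fun z _ => ?_
  rw [ENNReal.toReal_sum fun _ _ => ENNReal.ofReal_ne_top,
    ENNReal.toReal_sum fun _ _ => ENNReal.ofReal_ne_top, ← sum_sub_distrib]
  simp only [ENNReal.toReal_ofReal', max_zero_sub_max_neg_zero_eq_self]

theorem sum_sum_logKer_eq_neg_log_pairwiseDistProd (S : Finset ℂ) :
    ∑ z ∈ S, ∑ w ∈ S, logKer z w = -Real.log (pairwiseDistProd S.val) := by
  change _ = -Real.log (∏ z ∈ S, ∏ w ∈ S.erase z, ‖z - w‖)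
  have hne : ∀ z ∈ S, ∀ w ∈ S.erase z, ‖z - w‖ ≠ 0 := fun z _ w hw =>
    norm_ne_zero_iff.2 (sub_ne_zero.2 (ne_of_mem_erase hw).symm)
  rw [Real.log_prod fun z hz => prod_ne_zero_iff.2 (hne z hz), ← sum_neg_distrib]
  refine sum_congr rfl fun z hz => ?_
  -- `Real.log 0 = 0`, so the diagonal carries no self-energy
  rw [← add_sum_erase S _ hz, logKer_eq_neg_log_dist z z, dist_self, Real.log_zero, neg_zero,
    zero_add, Real.log_prod (hne z hz), ← sum_neg_distrib]
  simp only [logKer_eq_neg_log_dist, dist_eq_norm]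

theorem eqEnergy_le_energyI {K : Set ℂ} (μ : Measure ℂ) [IsProbabilityMeasure μ]
    (hμ : μ Kᶜ = 0) : eqEnergy K ≤ energyI μ :=
  iInf₂_le_of_le μ ‹_› (iInf_le _ hμ)

theorem eqEnergy_le_neg_log_pairwiseDistProd {K : Set ℂ} {S : Finset ℂ} (hS : S.Nonempty)
    (hSK : ↑S ⊆ K) :
    eqEnergy K ≤ ((-((#S : ℝ)⁻¹ ^ 2 * Real.log (pairwiseDistProd S.val)) : ℝ) : EReal) := by
  have := isProbabilityMeasure_uniformMeasure S hS
  have h := eqEnergy_le_energyI (uniformMeasure S) (uniformMeasure_compl_eq_zero S hSK)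
  rwa [energyI_uniformMeasure hS, sum_sum_logKer_eq_neg_log_pairwiseDistProd, mul_neg] at h

theorem neg_log_le_energyI {K : Set ℂ} {D : ℝ} (hD : 1 ≤ D)
    (hK : ∀ z ∈ K, ∀ w ∈ K, dist z w ≤ D) (μ : Measure ℂ) [IsProbabilityMeasure μ]
    (hμ : μ Kᶜ = 0) : ((-Real.log D : ℝ) : EReal) ≤ energyI μ := by
  have hKae : ∀ᵐ z ∂μ, z ∈ K :=
    measure_eq_zero_iff_ae_notMem.1 hμ |>.mono fun _ h => not_not.1 h
  have hlog : ∀ᵐ q ∂μ.prod μ,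
      ENNReal.ofReal (-logKer q.1 q.2) ≤ ENNReal.ofReal (Real.log D) := by
    filter_upwards [measurePreserving_fst.quasiMeasurePreserving.ae hKae,
      measurePreserving_snd.quasiMeasurePreserving.ae hKae] with q h1 h2
    refine ENNReal.ofReal_le_ofReal ?_
    rw [logKer_eq_neg_log_dist, neg_neg]
    rcases (dist_nonneg (x := q.1) (y := q.2)).eq_or_lt with h0 | hpos
    · rw [← h0, Real.log_zero]
      exact Real.log_nonneg hD
    · exact Real.log_le_log hpos (hK _ h1 _ h2)
  have hneg : ∫⁻ q, ENNReal.ofReal (-logKer q.1 q.2) ∂μ.prod μ ≤ ENNReal.ofReal (Real.log D) :=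
    (lintegral_mono_ae hlog).trans (by simp)
  rw [energyI, mutualEnergy, EReal.coe_neg, ← zero_sub]
  refine EReal.sub_le_sub (EReal.coe_ennreal_nonneg _) ?_
  calc _ ≤ ((ENNReal.ofReal (Real.log D) : ℝ≥0∞) : EReal) :=
        EReal.coe_ennreal_le_coe_ennreal_iff.2 hneg
    _ = _ := by rw [EReal.coe_ennreal_ofReal, max_eq_left (Real.log_nonneg hD)]

theorem eqEnergy_ne_bot {K : Set ℂ} (hK : Bornology.IsBounded K) : eqEnergy K ≠ ⊥ := by
  obtain ⟨C, hC⟩ := Metric.isBounded_iff.1 hK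
  have hbound : ((-Real.log (max C 1) : ℝ) : EReal) ≤ eqEnergy K :=
    le_iInf₂ fun μ _ => le_iInf fun hμ => neg_log_le_energyI (le_max_right C 1)
      (fun z hz w hw => (hC hz hw).trans (le_max_left C 1)) μ hμ
  exact ne_bot_of_le_ne_bot (EReal.coe_ne_bot _) hbound

theorem rpow_inv_sq_le_logCap {K : Set ℂ} (hK : Bornology.IsBounded K) {d : ℕ} (hd : 0 < d)
    {ρ κ : ℝ} (hρ : 0 < ρ) (hκ : 0 < κ)
    (hconf : ∀ n : ℕ, 0 < n → ∃ Z : Finset ℂ, ↑Z ⊆ K ∧ #Z = n * d ∧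
      ρ ^ (n ^ 2) * κ ^ n ≤ pairwiseDistProd Z.val) :
    ρ ^ ((d : ℝ) ^ 2)⁻¹ ≤ logCap K := by
  set e : ℕ → ℝ := fun n => -(Real.log ρ + Real.log κ / n) / (d : ℝ) ^ 2
  have hle : ∀ n : ℕ, 0 < n → eqEnergy K ≤ (e n : EReal) := by
    intro n hn
    obtain ⟨Z, hZK, hcard, hprod⟩ := hconf n hn
    have hZ : Z.Nonempty := card_pos.1 (hcard ▸ Nat.mul_pos hn hd)
    refine (eqEnergy_le_neg_log_pairwiseDistProd hZ hZK).trans (EReal.coe_le_coe_iff.2 ?_)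
    have hlog := Real.log_le_log (by positivity) hprod
    rw [Real.log_mul (by positivity) (by positivity), Real.log_pow, Real.log_pow] at hlog
    have hn' : (0 : ℝ) < n := Nat.cast_pos.2 hn
    have hd' : (0 : ℝ) < d := Nat.cast_pos.2 hd
    calc -((#Z : ℝ)⁻¹ ^ 2 * Real.log (pairwiseDistProd Z.val))
        ≤ -((n * d : ℝ)⁻¹ ^ 2 * ((n ^ 2 : ℕ) * Real.log ρ + n * Real.log κ)) := by
          rw [hcard, Nat.cast_mul]
          gcongr
      _ = e n := by
          simp only [e]
          field_simp
          push_cast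
          ring
  have hne_top : eqEnergy K ≠ ⊤ := ne_top_of_le_ne_top (EReal.coe_ne_top _) (hle 1 one_pos)
  have hlim : Filter.Tendsto e Filter.atTop (𝓝 (-Real.log ρ / (d : ℝ) ^ 2)) := by
    have := ((tendsto_const_nhds (x := Real.log ρ)).add
      ((tendsto_const_nhds (x := Real.log κ)).div_atTop tendsto_natCast_atTop_atTop)).neg.div_const
      ((d : ℝ) ^ 2)
    rwa [add_zero] at this
  have henergy : (eqEnergy K).toReal ≤ -Real.log ρ / (d : ℝ) ^ 2 :=
    ge_of_tendsto hlim (Filter.eventually_atTop.2 ⟨1, fun n hn =>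
      EReal.toReal_le_toReal (hle n hn) (eqEnergy_ne_bot hK) (EReal.coe_ne_top _)⟩)
  rw [logCap, if_neg hne_top, Real.rpow_def_of_pos hρ, Real.exp_le_exp]
  linarith [show -Real.log ρ / (d : ℝ) ^ 2 = -(Real.log ρ * ((d : ℝ) ^ 2)⁻¹) by ring]

end energy

namespace Polynomial

theorem eval_derivative_of_mem_roots {K : Type*} [Field K] [IsAlgClosed K] {H : K[X]} {z : K}
    (hz : z ∈ H.roots) :
    (derivative H).eval z = H.leadingCoeff * ((H.roots.erase z).map (z - ·)).prod := by
  conv_lhs => rw [(IsAlgClosed.splits H).eq_prod_roots]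
  rw [derivative_C_mul, eval_mul, eval_C, eval_multiset_prod_X_sub_C_derivative hz]

theorem norm_resultant_comm (A B : ℂ[X]) : ‖A.resultant B‖ = ‖B.resultant A‖ := by
  rw [resultant_comm, norm_mul, norm_pow, norm_neg, norm_one, one_pow, one_mul]

theorem norm_resultant_eq_prod (A B : ℂ[X]) :
    ‖A.resultant B‖ = ‖A.leadingCoeff‖ ^ B.natDegree * (A.roots.map fun α => ‖B.eval α‖).prod := by
  rw [resultant_eq_prod_eval A B _ le_rfl (IsAlgClosed.splits A), norm_mul, norm_pow,
    norm_multiset_prod, Multiset.map_map]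
  rfl

theorem norm_resultant_pos {A B : ℂ[X]} (hA : A ≠ 0) (h : ∀ α ∈ A.roots, B.eval α ≠ 0) :
    0 < ‖A.resultant B‖ := by
  rw [norm_resultant_eq_prod]
  refine mul_pos (pow_pos (norm_pos_iff.2 (leadingCoeff_ne_zero.2 hA)) _)
    (Multiset.prod_pos fun _ hx => ?_)
  obtain ⟨α, hα, rfl⟩ := Multiset.mem_map.1 hx
  exact norm_pos_iff.2 (h α hα)

theorem eval_ne_zero_of_mem_roots {R : Type*} [CommRing R] [IsDomain R] {A Q : R[X]}
    (hQ : Q ≠ 0) (h : ∀ α ∈ Q.roots, A.eval α ≠ 0) {β : R} (hβ : β ∈ A.roots) :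
    Q.eval β ≠ 0 := fun hQβ =>
  h β ((mem_roots hQ).2 hQβ) (isRoot_of_mem_roots hβ).eq_zero

theorem eval_wronskian_ne_zero_of_mem_roots {K : Type*} [Field K] {P Q : K[X]}
    (hsep : Q.Separable) {α : K} (hα : α ∈ Q.roots) (hPα : P.eval α ≠ 0) :
    (wronskian P Q).eval α ≠ 0 := by
  have hQα := (isRoot_of_mem_roots hα).eq_zero
  rw [wronskian, eval_sub, eval_mul, eval_mul, hQα, mul_zero, sub_zero]
  exact mul_ne_zero hPα
    (by simpa using hsep.aeval_derivative_ne_zero (x := α) (by simpa using hQα))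

/-- The polynomial whose roots are the solutions of `(P / Q) ^ n = u`. -/
noncomputable def fiberPoly {R : Type*} [CommRing R] (P Q : R[X]) (n : ℕ) (u : R) : R[X] :=
  C u * Q ^ n - P ^ n

section fiberPoly

variable {R : Type*} [CommRing R] {P Q : R[X]} {n : ℕ} {u : R}

theorem eval_fiberPoly_of_eval_eq_zero {α : R} (hα : Q.eval α = 0) (hn : n ≠ 0) :
    (fiberPoly P Q n u).eval α = -P.eval α ^ n := by
  simp [fiberPoly, hα, hn]

theorem eval_mul_eval_mul_eval_derivative_fiberPoly {z : R}
    (hz : (fiberPoly P Q n u).eval z = 0) :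
    P.eval z * Q.eval z * (derivative (fiberPoly P Q n u)).eval z =
      n * u * Q.eval z ^ n * (wronskian P Q).eval z := by
  rcases n with _ | m
  · simp [fiberPoly]
  simp only [fiberPoly, eval_sub, eval_mul, eval_C, eval_pow, sub_eq_zero] at hz
  simp only [fiberPoly, wronskian, derivative_sub, derivative_C_mul, derivative_pow, eval_sub,
    eval_mul, eval_C, eval_pow, Nat.add_sub_cancel]
  push_cast
  linear_combination ((m + 1 : R) * Q.eval z * (derivative P).eval z) * hz

theorem natDegree_fiberPoly [IsDomain R] (hQ : Q.Monic) (hPQ : P.natDegree < Q.natDegree)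
    (hn : n ≠ 0) (hu : u ≠ 0) :
    (fiberPoly P Q n u).natDegree = n * Q.natDegree ∧ (fiberPoly P Q n u).leadingCoeff = u := by
  have hmain : (C u * Q ^ n).natDegree = n * Q.natDegree := by
    rw [natDegree_C_mul hu, hQ.natDegree_pow]
  have hlow : (P ^ n).natDegree < (C u * Q ^ n).natDegree :=
    natDegree_pow_le.trans_lt (hmain ▸ Nat.mul_lt_mul_of_pos_left hPQ (Nat.pos_of_ne_zero hn))
  refine ⟨(natDegree_sub_eq_left_of_natDegree_lt hlow).trans hmain, ?_⟩
  rw [fiberPoly, leadingCoeff_sub_of_degree_lt (degree_lt_degree hlow), leadingCoeff_mul,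
    leadingCoeff_C, (hQ.pow n).leadingCoeff, mul_one]

end fiberPoly

theorem eval_fiberPoly_of_eval_ne_zero {K : Type*} [Field K] {P Q : K[X]} {n : ℕ} {u z : K}
    (hz : Q.eval z ≠ 0) :
    (fiberPoly P Q n u).eval z = Q.eval z ^ n * (u - (P.eval z / Q.eval z) ^ n) := by
  simp only [fiberPoly, eval_sub, eval_mul, eval_C, eval_pow, div_pow]
  field_simp

section fiberPolyNorm

variable {P Q : ℂ[X]} {n : ℕ} {u : ℂ}

theorem norm_eval_eq_of_mem_roots_fiberPoly (hn : n ≠ 0) (hu : ‖u‖ = 1) {z : ℂ}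
    (hz : z ∈ (fiberPoly P Q n u).roots) : ‖P.eval z‖ = ‖Q.eval z‖ := by
  have h := (isRoot_of_mem_roots hz).eq_zero
  simp only [fiberPoly, eval_sub, eval_mul, eval_C, eval_pow, sub_eq_zero] at h
  have := congrArg (‖·‖) h
  simp only [norm_mul, norm_pow, hu, one_mul] at this
  exact ((pow_left_inj₀ (norm_nonneg _) (norm_nonneg _) hn).1 this).symm

theorem prod_norm_eval_roots_fiberPoly (hQ : Q.Monic) (hPQ : P.natDegree < Q.natDegree)
    (hn : n ≠ 0) (hu : ‖u‖ = 1) (A : ℂ[X]) :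
    ((fiberPoly P Q n u).roots.map fun z => ‖A.eval z‖).prod =
      ‖A.resultant (fiberPoly P Q n u)‖ := by
  rw [norm_resultant_comm, norm_resultant_eq_prod,
    (natDegree_fiberPoly hQ hPQ hn (norm_ne_zero_iff.1 (hu ▸ one_ne_zero))).2, hu, one_pow,
    one_mul]

theorem norm_resultant_numerator_fiberPoly (hQ : Q.Monic) (hPQ : P.natDegree < Q.natDegree)
    (hn : n ≠ 0) (hu : ‖u‖ = 1) :
    ‖P.resultant (fiberPoly P Q n u)‖ = ‖P.resultant Q‖ ^ n := by
  rw [norm_resultant_eq_prod, norm_resultant_eq_prod,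
    (natDegree_fiberPoly hQ hPQ hn (norm_ne_zero_iff.1 (hu ▸ one_ne_zero))).1, mul_pow,
    ← pow_mul, mul_comm n, ← Multiset.prod_map_pow]
  congr 2
  refine Multiset.map_congr rfl fun β hβ => ?_
  simp [fiberPoly, (isRoot_of_mem_roots hβ).eq_zero, hn, hu]

theorem norm_resultant_denominator_fiberPoly (hQ : Q.Monic) (hn : n ≠ 0) :
    ‖Q.resultant (fiberPoly P Q n u)‖ = ‖Q.resultant P‖ ^ n := by
  rw [norm_resultant_eq_prod, norm_resultant_eq_prod, hQ.leadingCoeff, norm_one, one_pow,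
    one_pow, one_mul, one_mul, ← Multiset.prod_map_pow]
  refine congrArg _ (Multiset.map_congr rfl fun α hα => ?_)
  rw [eval_fiberPoly_of_eval_eq_zero (isRoot_of_mem_roots hα) hn, norm_neg, norm_pow]

theorem norm_resultant_pow_mul_pow_le_norm_resultant_fiberPoly (hQ : Q.Monic)
    (hPQ : P.natDegree < Q.natDegree) (hn : n ≠ 0) (hu : ‖u‖ = 1) {A : ℂ[X]}
    (hA : ∀ α ∈ A.roots, Q.eval α ≠ 0) {r : ℝ} (hr : 0 ≤ r)
    (hfar : ∀ α ∈ A.roots, r ≤ ‖u - (P.eval α / Q.eval α) ^ n‖) :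
    ‖A.resultant Q‖ ^ n * r ^ Multiset.card A.roots ≤ ‖A.resultant (fiberPoly P Q n u)‖ := by
  rw [norm_resultant_eq_prod, norm_resultant_eq_prod,
    (natDegree_fiberPoly hQ hPQ hn (norm_ne_zero_iff.1 (hu ▸ one_ne_zero))).1, mul_pow,
    ← pow_mul, mul_comm n, mul_assoc, ← Multiset.prod_map_pow]
  gcongr
  calc _ = (A.roots.map fun α => ‖Q.eval α‖ ^ n * r).prod := by
        rw [Multiset.prod_map_mul, Multiset.map_const', Multiset.prod_replicate]
    _ ≤ _ := Multiset.prod_map_le_prod_map₀ _ _ (fun _ _ => by positivity) fun α hα => by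
        rw [eval_fiberPoly_of_eval_ne_zero (hA α hα), norm_mul, norm_pow]
        exact mul_le_mul_of_nonneg_left (hfar α hα) (by positivity)

theorem pairwiseDistProd_roots_fiberPoly_mul (hQ : Q.Monic) (hPQ : P.natDegree < Q.natDegree)
    (hn : n ≠ 0) (hu : ‖u‖ = 1) :
    pairwiseDistProd (fiberPoly P Q n u).roots *
        (‖P.resultant (fiberPoly P Q n u)‖ * ‖Q.resultant (fiberPoly P Q n u)‖) =
      (n : ℝ) ^ (n * Q.natDegree) *
        (‖Q.resultant (fiberPoly P Q n u)‖ ^ n *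
          ‖(wronskian P Q).resultant (fiberPoly P Q n u)‖) := by
  obtain ⟨hdeg, hlc⟩ := natDegree_fiberPoly hQ hPQ hn (norm_ne_zero_iff.1 (hu ▸ one_ne_zero))
  have hpt : ∀ z ∈ (fiberPoly P Q n u).roots,
      ((((fiberPoly P Q n u).roots.erase z).map fun w => ‖z - w‖).prod) *
          (‖P.eval z‖ * ‖Q.eval z‖) = n * (‖Q.eval z‖ ^ n * ‖(wronskian P Q).eval z‖) := by
    intro z hz
    have h := congrArg (‖·‖)
      (eval_mul_eval_mul_eval_derivative_fiberPoly (isRoot_of_mem_roots hz))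
    simp only [eval_derivative_of_mem_roots hz, hlc, norm_mul, norm_pow, hu, Complex.norm_natCast,
      norm_multiset_prod, Multiset.map_map, Function.comp_def] at h
    linear_combination h
  simp only [← prod_norm_eval_roots_fiberPoly hQ hPQ hn hu]
  rw [pairwiseDistProd, ← Multiset.prod_map_mul, ← Multiset.prod_map_pow, ← Multiset.prod_map_mul,
    Multiset.map_congr rfl hpt, Multiset.prod_map_mul, Multiset.map_const', Multiset.prod_replicate,
    ← (IsAlgClosed.splits _).natDegree_eq_card_roots, hdeg, Multiset.prod_map_mul]

theorem pow_sq_mul_le_pairwiseDistProd_roots_fiberPoly_mul (hQ : Q.Monic)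
    (hPQ : P.natDegree < Q.natDegree) (hn : n ≠ 0) (hu : ‖u‖ = 1)
    (hW : ∀ τ ∈ (wronskian P Q).roots, Q.eval τ ≠ 0) {r : ℝ} (hr : 0 ≤ r)
    (hfar : ∀ τ ∈ (wronskian P Q).roots, r ≤ ‖u - (P.eval τ / Q.eval τ) ^ n‖) :
    ‖Q.resultant P‖ ^ (n ^ 2) *
        (‖(wronskian P Q).resultant Q‖ ^ n * r ^ Multiset.card (wronskian P Q).roots) ≤
      pairwiseDistProd (fiberPoly P Q n u).roots * (‖P.resultant Q‖ * ‖Q.resultant P‖) ^ n := by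
  have key := pairwiseDistProd_roots_fiberPoly_mul hQ hPQ hn hu
  rw [norm_resultant_numerator_fiberPoly hQ hPQ hn hu,
    norm_resultant_denominator_fiberPoly hQ hn, ← pow_mul, ← sq] at key
  calc _ ≤ ‖Q.resultant P‖ ^ (n ^ 2) * ‖(wronskian P Q).resultant (fiberPoly P Q n u)‖ := by
        gcongr
        exact norm_resultant_pow_mul_pow_le_norm_resultant_fiberPoly hQ hPQ hn hu hW hr hfar
    _ ≤ (n : ℝ) ^ (n * Q.natDegree) *
          (‖Q.resultant P‖ ^ (n ^ 2) * ‖(wronskian P Q).resultant (fiberPoly P Q n u)‖) :=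
        le_mul_of_one_le_left (by positivity)
          (one_le_pow₀ (Nat.one_le_cast.2 (Nat.one_le_iff_ne_zero.2 hn)))
    _ = _ := by rw [← key, mul_pow]

end fiberPolyNorm

theorem exists_pos_forall_exists_pow_sq_mul_pow_le_pairwiseDistProd {P Q : ℂ[X]}
    (hQ : Q.Monic) (hPQ : P.natDegree < Q.natDegree) (hsep : Q.Separable)
    (hcop : ∀ α ∈ Q.roots, P.eval α ≠ 0) :
    ∃ κ > 0, ∀ n : ℕ, 0 < n → ∃ Z : Finset ℂ, (∀ z ∈ Z, ‖P.eval z‖ = ‖Q.eval z‖) ∧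
      Z.card = n * Q.natDegree ∧ ‖Q.resultant P‖ ^ (n ^ 2) * κ ^ n ≤ pairwiseDistProd Z.val := by
  set W := wronskian P Q
  obtain ⟨α₀, hα₀⟩ := Multiset.card_pos_iff_exists_mem.1
    ((IsAlgClosed.splits Q).natDegree_eq_card_roots ▸ (Nat.zero_le _).trans_lt hPQ)
  have hQW : ∀ α ∈ Q.roots, W.eval α ≠ 0 := fun α hα =>
    eval_wronskian_ne_zero_of_mem_roots hsep hα (hcop α hα)
  have hW : ∀ τ ∈ W.roots, Q.eval τ ≠ 0 := fun τ => eval_ne_zero_of_mem_roots hQ.ne_zero hQW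
  have hρ := norm_resultant_pos hQ.ne_zero hcop
  have hcP := norm_resultant_pos (fun h => hcop α₀ hα₀ (by simp [h]))
    fun β => eval_ne_zero_of_mem_roots hQ.ne_zero hcop
  have hcW := norm_resultant_pos (fun h => hQW α₀ hα₀ (by simp [h])) hW
  obtain ⟨r, hr, hfar⟩ := exists_pos_forall_exists_norm_eq_one_le_dist (Multiset.card W.roots)
  refine ⟨‖W.resultant Q‖ * min r 1 ^ Multiset.card W.roots / (‖P.resultant Q‖ * ‖Q.resultant P‖),
    by positivity, fun n hn => ?_⟩
  obtain ⟨u, hu, hufar⟩ := hfar (W.roots.toFinset.image fun τ => (P.eval τ / Q.eval τ) ^ n)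
    (Finset.card_image_le.trans (Multiset.toFinset_card_le _))
  have hV := pow_sq_mul_le_pairwiseDistProd_roots_fiberPoly_mul hQ hPQ hn.ne' hu hW
    (le_min hr.le zero_le_one) fun τ hτ => (min_le_left _ _).trans
      (dist_eq_norm u _ ▸ hufar _ (Finset.mem_image_of_mem _ (Multiset.mem_toFinset.2 hτ)))
  have hV' : ‖Q.resultant P‖ ^ (n ^ 2) *
      (‖W.resultant Q‖ * min r 1 ^ Multiset.card W.roots / (‖P.resultant Q‖ * ‖Q.resultant P‖)) ^ n
        ≤ pairwiseDistProd (fiberPoly P Q n u).roots := by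
    rw [div_pow, mul_div_assoc', div_le_iff₀ (by positivity)]
    refine le_trans ?_ hV
    rw [mul_pow, ← pow_mul, mul_comm _ n, pow_mul]
    gcongr
    exact pow_le_of_le_one (by positivity) (min_le_right _ _) hn.ne'
  refine ⟨⟨_, Multiset.nodup_of_pairwiseDistProd_ne_zero (hV'.trans_lt' (by positivity)).ne'⟩,
    fun z hz => norm_eval_eq_of_mem_roots_fiberPoly hn.ne' hu hz, ?_, hV'⟩
  rw [Finset.card_mk, ← (IsAlgClosed.splits _).natDegree_eq_card_roots,
    (natDegree_fiberPoly hQ hPQ hn.ne' (norm_ne_zero_iff.1 (hu ▸ one_ne_zero))).1]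

end Polynomial
theorem tendsto_ratSum_cobounded {d : ℕ} (a p : Fin d → ℂ) :
    Filter.Tendsto (ratSum a p) (Bornology.cobounded ℂ) (𝓝 0) := by
  unfold ratSum
  have h : ∀ i, Filter.Tendsto (fun z => a i / (z - p i)) (Bornology.cobounded ℂ) (𝓝 0) :=
    fun i => by simpa [div_eq_mul_inv] using
      (tendsto_inv₀_cobounded.comp (tendsto_sub_const_cobounded (p i))).const_mul (a i)
  simpa using tendsto_finsetSum Finset.univ fun i _ => h i

theorem isBounded_lemniscate {d : ℕ} (a p : Fin d → ℂ) {t : ℝ} (ht : 0 < t) :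
    Bornology.IsBounded (lemniscate a p t) := by
  have hsmall : ∀ᶠ z in Bornology.cobounded ℂ, ‖ratSum a p z‖ < t :=
    (tendsto_ratSum_cobounded a p).norm.eventually (gt_mem_nhds (by simpa using ht))
  refine (Set.finite_range p).isBounded.union (Bornology.isBounded_def.2 ?_)
  filter_upwards [hsmall] with z hz using not_le.2 hz

namespace Polynomial

open Finset Lagrange

noncomputable def ratSumNumerator {d : ℕ} (a p : Fin d → ℂ) : ℂ[X] :=
  ∑ i, C (a i) * nodal (univ.erase i) p

variable {d : ℕ} (a p : Fin d → ℂ)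

theorem ratSum_eq_eval_div_eval {z : ℂ} (hz : z ∉ Set.range p) :
    ratSum a p z = (ratSumNumerator a p).eval z / (nodal univ p).eval z := by
  have hzp : ∀ i, z - p i ≠ 0 := fun i => sub_ne_zero.2 fun h => hz ⟨i, h.symm⟩
  rw [eq_div_iff (by simpa [eval_nodal, prod_eq_zero_iff] using hzp), ratSum, sum_mul,
    ratSumNumerator, eval_finsetSum]
  refine sum_congr rfl fun i _ => ?_
  rw [nodal_eq_mul_nodal_erase (mem_univ i), eval_mul, eval_mul, eval_C, eval_sub, eval_X, eval_C]
  field_simp [hzp i]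

theorem eval_ratSumNumerator_node (i : Fin d) :
    (ratSumNumerator a p).eval (p i) = a i * ∏ j ∈ univ.erase i, (p i - p j) := by
  rw [ratSumNumerator, eval_finsetSum, sum_eq_single i, eval_mul, eval_C, eval_nodal]
  · intro j _ hji
    rw [eval_mul, eval_nodal_at_node (mem_erase.2 ⟨hji.symm, mem_univ i⟩), mul_zero]
  · simp

theorem natDegree_ratSumNumerator_lt (hd : 0 < d) : (ratSumNumerator a p).natDegree < d :=
  (natDegree_sum_le_of_forall_le _ _ (n := d - 1) fun i _ =>
    (natDegree_C_mul_le _ _).trans (by simp [natDegree_nodal])).trans_lt (by omega)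

theorem roots_nodal_univ : (nodal univ p).roots = univ.val.map p := by
  rw [← roots_multiset_prod_X_sub_C (univ.val.map p), Multiset.map_map, nodal_eq,
    prod_eq_multiset_prod]
  rfl

theorem norm_resultant_nodal_ratSumNumerator :
    ‖(nodal univ p).resultant (ratSumNumerator a p)‖ =
      (∏ i, ∏ j ∈ univ.filter (· ≠ i), ‖p i - p j‖) * ∏ i, ‖a i‖ := by
  rw [norm_resultant_eq_prod, nodal_monic.leadingCoeff, norm_one, one_pow, one_mul,
    roots_nodal_univ, Multiset.map_map, ← prod_mul_distrib]
  refine prod_congr rfl fun i _ => ?_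
  rw [Function.comp_apply, eval_ratSumNumerator_node, norm_mul, norm_prod, filter_ne', mul_comm]

theorem eval_ratSumNumerator_ne_zero_of_mem_roots (ha : ∀ i, a i ≠ 0)
    (hp : Function.Injective p) :
    ∀ α ∈ (nodal univ p).roots, (ratSumNumerator a p).eval α ≠ 0 := by
  intro α hα
  obtain ⟨i, -, rfl⟩ := Multiset.mem_map.1 (roots_nodal_univ p ▸ hα)
  rw [eval_ratSumNumerator_node]
  exact mul_ne_zero (ha i) (prod_ne_zero_iff.2 fun j hj =>
    sub_ne_zero.2 fun hij => (mem_erase.1 hj).1 (hp hij).symm)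

theorem exists_pos_forall_exists_subset_lemniscate (hd : 0 < d) (ha : ∀ i, a i ≠ 0)
    (hp : Function.Injective p) :
    ∃ κ > 0, ∀ n : ℕ, 0 < n → ∃ Z : Finset ℂ, ↑Z ⊆ lemniscate a p 1 ∧ Z.card = n * d ∧
      ‖(nodal univ p).resultant (ratSumNumerator a p)‖ ^ (n ^ 2) * κ ^ n ≤
        pairwiseDistProd Z.val := by
  have hdeg : (nodal univ p).natDegree = d := by simp [natDegree_nodal]
  obtain ⟨κ, hκ, hconf⟩ := exists_pos_forall_exists_pow_sq_mul_pow_le_pairwiseDistProd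
    nodal_monic (by rw [hdeg]; exact natDegree_ratSumNumerator_lt a p hd)
    (nodal_eq univ p ▸ separable_prod_X_sub_C_iff.2 hp)
    (eval_ratSumNumerator_ne_zero_of_mem_roots a p ha hp)
  refine ⟨κ, hκ, fun n hn => ?_⟩
  obtain ⟨Z, hZ, hcard, hprod⟩ := hconf n hn
  refine ⟨Z, fun z hz => ?_, hdeg ▸ hcard, hprod⟩
  by_cases hzp : z ∈ Set.range p
  · exact Or.inl hzp
  · refine Or.inr (le_of_eq ?_)
    rw [ratSum_eq_eval_div_eval a p hzp, norm_div, hZ z hz, div_self]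
    simpa [eval_nodal, prod_eq_zero_iff, sub_eq_zero] using fun i h => hzp ⟨i, h.symm⟩

end Polynomial

/-- If `R = ∑ i, a i / (z - p i)` is a `d`-good rational function with
lemniscate `K = {z : |R z| ≥ 1}`, then
`cap K ≥ (∏_{i ≠ j} |p i - p j| * ∏ i, |a i|) ^ (1/d²)`. -/
theorem capacity_lemniscate_lower_bound
    (d : ℕ) (hd : 0 < d) (a p : Fin d → ℂ) (h : IsGoodRat d a p) :
    ((∏ i, ∏ j ∈ Finset.univ.filter (· ≠ i), ‖p i - p j‖) *
        ∏ i, ‖a i‖) ^ (((d : ℝ) ^ 2)⁻¹)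
      ≤ logCap (lemniscate a p 1) := by
  obtain ⟨κ, hκ, hconf⟩ :=
    Polynomial.exists_pos_forall_exists_subset_lemniscate a p hd h.residue_ne h.poles_inj
  rw [← Polynomial.norm_resultant_nodal_ratSumNumerator]
  exact rpow_inv_sq_le_logCap (isBounded_lemniscate a p one_pos) hd
    (Polynomial.norm_resultant_pos Lagrange.nodal_ne_zero
      (Polynomial.eval_ratSumNumerator_ne_zero_of_mem_roots a p h.residue_ne h.poles_inj))
    hκ hconf
end

section
/- Let a > 0 and η ∈ (2/3, 1), and for p > 1 define R_p(z) := a/(z − p) + (p − p^η)/(z − ip) + (p − p^η)/(z + ip). Then there exists p_0 = p_0(a, η) such that for all p > p_0, every critical point c of R_p (i.e. every c ∈ ℂ with R_p'(c) = 0) satisfies |R_p(c)| < 1. -/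
open MeasureTheory Metric Complex Set Topology Filter OnePoint
open scoped Classical

noncomputable section

/-- The residues of the rational function `R_p` of the counterexample. -/
def aVec (a η p : ℝ) : Fin 3 → ℂ :=
  ![(a : ℂ), ((p - p ^ η : ℝ) : ℂ), ((p - p ^ η : ℝ) : ℂ)]

/-- The poles `p`, `ip`, `-ip` of the rational function `R_p` of the counterexample. -/
def pVec (p : ℝ) : Fin 3 → ℂ :=
  ![(p : ℂ), (p : ℂ) * Complex.I, -((p : ℂ) * Complex.I)]

/-- `R_p(z) = a/(z-p) + (p-p^η)/(z-ip) + (p-p^η)/(z+ip)`. -/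
def Rpfun (a η p : ℝ) (z : ℂ) : ℂ :=
  (a : ℂ) / (z - (p : ℂ)) + ((p - p ^ η : ℝ) : ℂ) / (z - (p : ℂ) * Complex.I)
    + ((p - p ^ η : ℝ) : ℂ) / (z + (p : ℂ) * Complex.I)

end

/-!
Write a critical point as `c = p w`. The critical-point equation becomes
`(w - 1)³ (w + 1) = -ε (w² + 1)²` with `ε = a / (2 (p - p^η)) ≈ a / (2p)`, and then
`R_p(c) = 2 (p - p^η) (w² + 2w - 1) / (p (w² + 1)²)`, so with `q = p^(η - 1)` the claim reads
`2 (1 - q) |w² + 2w - 1| < |w² + 1|²`. At `w = ±1` this is `4 (1 - q) < 4`. For small `ε` the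
critical points lie within `O(ε)` of `-1` or within `O(ε^(1/3))` of `1`, where the error terms are
`O(ε)` and `O(ε^(2/3))` respectively; both are beaten by `q` once `ε² ≪ q³`, i.e.
`p⁻² ≪ p^(3η - 3)`, which holds for large `p` because `η > 2/3`.
-/

noncomputable def poleSum (A B P z : ℂ) : ℂ := A / (z - P) + B / (z - P * I) + B / (z + P * I)

theorem Rpfun_eq_poleSum (a η p : ℝ) : Rpfun a η p = poleSum a (p - p ^ η : ℝ) p := rfl

section PoleSum

variable {A B P w : ℂ}

theorem hasDerivAt_div_sub_const (C Q : ℂ) {z : ℂ} (hz : z ≠ Q) :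
    HasDerivAt (fun x => C / (x - Q)) (-(C / (z - Q) ^ 2)) z :=
  ((hasDerivAt_const z C).div ((hasDerivAt_id' z).sub_const Q) (sub_ne_zero.2 hz)).congr_deriv
    (by ring)

theorem hasDerivAt_poleSum {z : ℂ} (h₁ : z ≠ P) (h₂ : z ≠ P * I) (h₃ : z ≠ -(P * I)) :
    HasDerivAt (poleSum A B P)
      (-(A / (z - P) ^ 2 + B / (z - P * I) ^ 2 + B / (z + P * I) ^ 2)) z := by
  have h := ((hasDerivAt_div_sub_const A P h₁).add (hasDerivAt_div_sub_const B _ h₂)).add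
    (hasDerivAt_div_sub_const B _ h₃)
  simp only [sub_neg_eq_add] at h
  exact h.congr_deriv (by ring)

theorem sq_add_one_eq_sub_I_mul_add_I (w : ℂ) : w ^ 2 + 1 = (w - I) * (w + I) := by
  linear_combination I_sq

theorem poleSum_apply_mul (hP : P ≠ 0) (hw₁ : w ≠ 1) (hw₂ : w ^ 2 + 1 ≠ 0) :
    poleSum A B P (P * w) = (A / (w - 1) + 2 * B * w / (w ^ 2 + 1)) / P := by
  rw [sq_add_one_eq_sub_I_mul_add_I] at hw₂ ⊢
  have : w - 1 ≠ 0 := sub_ne_zero.2 hw₁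
  have := left_ne_zero_of_mul hw₂
  have := right_ne_zero_of_mul hw₂
  unfold poleSum
  field_simp
  ring

theorem critical_eq_of_deriv_poleSum_eq_zero (hP : P ≠ 0) (hw₁ : w ≠ 1) (hw₂ : w ^ 2 + 1 ≠ 0)
    (hcrit : deriv (poleSum A B P) (P * w) = 0) :
    A * (w ^ 2 + 1) ^ 2 + 2 * B * ((w - 1) ^ 3 * (w + 1)) = 0 := by
  rw [sq_add_one_eq_sub_I_mul_add_I] at hw₂ ⊢
  have h₁ : w - 1 ≠ 0 := sub_ne_zero.2 hw₁
  have h₂ := left_ne_zero_of_mul hw₂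
  have h₃ := right_ne_zero_of_mul hw₂
  have hd := (hasDerivAt_poleSum (A := A) (B := B) (P := P) (z := P * w)
    (fun h => mul_ne_zero hP h₁ (by rw [mul_sub, h, mul_one, sub_self]))
    (fun h => mul_ne_zero hP h₂ (by rw [mul_sub, h, sub_self]))
    (fun h => mul_ne_zero hP h₃ (by rw [mul_add, h, neg_add_cancel]))).deriv
  rw [hcrit, show P * w - P = P * (w - 1) by ring, show P * w - P * I = P * (w - I) by ring,
    show P * w + P * I = P * (w + I) by ring] at hd
  field_simp at hd
  linear_combination hd - 2 * B * (w - 1) ^ 2 * I_sq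

theorem poleSum_apply_mul_of_critical_eq (hP : P ≠ 0) (hw₁ : w ≠ 1) (hw₂ : w ^ 2 + 1 ≠ 0)
    (hcrit : A * (w ^ 2 + 1) ^ 2 + 2 * B * ((w - 1) ^ 3 * (w + 1)) = 0) :
    poleSum A B P (P * w) = 2 * B * (w ^ 2 + 2 * w - 1) / (P * (w ^ 2 + 1) ^ 2) := by
  have h₁ : w - 1 ≠ 0 := sub_ne_zero.2 hw₁
  rw [poleSum_apply_mul hP hw₁ hw₂, div_add_div _ _ h₁ hw₂, div_div,
    div_eq_div_iff (by positivity) (by positivity)]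
  linear_combination (P * (w ^ 2 + 1)) * hcrit

end PoleSum

section RealEstimates

/- In the applications `s = |w - 1|`, `u = |w + 1|` and `m = |w² + 1|` for a root `w` of
`(w - 1)³ (w + 1) = -ε (w² + 1)²`; the cases `s ≤ u` and `u ≤ s` are the roots near `1` and the
root near `-1`. -/

variable {s u m ε : ℝ}

theorem mul_le_one_of_pow_three_mul_eq (hs : 0 ≤ s) (hm₀ : 0 ≤ m) (hε₀ : 0 ≤ ε)
    (hε : ε ≤ 1 / 1000) (h : s ^ 3 * u = ε * m ^ 2) (hm : m ≤ s * u + 2) (hus : u ≤ s + 2) :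
    s * u ≤ 1 := by
  by_contra! hgt
  have hs₀ : 0 < s := lt_of_le_of_ne hs (by rintro rfl; simp at hgt; linarith)
  have hm3 : m ^ 2 ≤ 9 * (s * u) ^ 2 := by nlinarith
  have hs9 : s ≤ 9 * ε * u := by
    have : s * (s * u) * s ≤ s * (s * u) * (9 * ε * u) := by
      nlinarith [mul_le_mul_of_nonneg_left hm3 hε₀]
    exact le_of_mul_le_mul_left this (by positivity)
  have hs50 : s ≤ 1 / 50 := by nlinarith
  nlinarith

theorem pow_three_le_and_le_of_pow_three_mul_eq (hs : 0 ≤ s) (hu : 0 ≤ u) (hε₀ : 0 ≤ ε)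
    (hε : ε ≤ 1 / 1000) (h : s ^ 3 * u = ε * m ^ 2) (hm : |m - 2| ≤ s * u) (hus : u ≤ s + 2)
    (h2 : 2 ≤ s + u) (hsu₁ : s * u ≤ 1) (hle : s ≤ u) :
    s ^ 3 ≤ 9 / 2 * ε ∧ 8 / 5 ≤ m := by
  obtain ⟨hm₁, hm₂⟩ := abs_le.1 hm
  have hs4 : s ^ 4 ≤ 9 / 1000 := by nlinarith [mul_le_mul_of_nonneg_left hle (pow_nonneg hs 3)]
  have hs31 : s ≤ 31 / 100 :=
    le_of_pow_le_pow_left₀ (by norm_num) (by norm_num) (n := 4) (by norm_num; linarith)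
  have hm' : m ^ 2 ≤ (2717 / 1000) ^ 2 := by
    have := mul_le_mul hs31 hus hu (by norm_num)
    exact pow_le_pow_left₀ (by nlinarith) (by nlinarith) 2
  have hs3 : s ^ 3 ≤ 9 / 2 * ε := by nlinarith [mul_le_mul_of_nonneg_left hm' hε₀]
  have hs17 : s ≤ 17 / 100 :=
    le_of_pow_le_pow_left₀ (by norm_num) (by norm_num) (n := 3) (by norm_num; linarith)
  exact ⟨hs3, by nlinarith⟩

theorem le_and_mul_le_of_pow_three_mul_eq (hu : 0 ≤ u) (hε₀ : 0 ≤ ε)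
    (hε : ε ≤ 1 / 1000) (h : s ^ 3 * u = ε * m ^ 2) (hm : |m - 2| ≤ s * u) (hsu : s ≤ u + 2)
    (h2 : 2 ≤ s + u) (hsu₁ : s * u ≤ 1) (hle : u ≤ s) :
    u ≤ 8 / 5 * ε ∧ s * u ≤ 4 * ε := by
  obtain ⟨hm₁, hm₂⟩ := abs_le.1 hm
  have hu4 : u ^ 4 ≤ 9 / 1000 := by
    nlinarith [mul_le_mul_of_nonneg_right (pow_le_pow_left₀ hu hle 3) hu]
  have hu32 : u ≤ 32 / 100 :=
    le_of_pow_le_pow_left₀ (by norm_num) (by norm_num) (n := 4) (by norm_num; linarith)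
  have hm' : m ^ 2 ≤ (275 / 100) ^ 2 :=
    pow_le_pow_left₀ (by nlinarith) (by nlinarith [mul_le_mul_of_nonneg_right hsu hu]) 2
  have hs3 : (168 / 100) ^ 3 ≤ s ^ 3 := pow_le_pow_left₀ (by norm_num) (by linarith) 3
  have hu' : u ≤ 8 / 5 * ε := by nlinarith [mul_le_mul_of_nonneg_left hm' hε₀]
  exact ⟨hu', by nlinarith⟩

end RealEstimates

section NormEstimates

variable {w : ℂ} {ε : ℝ}

theorem abs_norm_sq_add_one_sub_two_le (w : ℂ) : |‖w ^ 2 + 1‖ - 2| ≤ ‖w - 1‖ * ‖w + 1‖ := by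
  have := abs_norm_sub_norm_le (w ^ 2 + 1) 2
  rwa [show w ^ 2 + 1 - 2 = (w - 1) * (w + 1) by ring, norm_mul, Complex.norm_two] at this

theorem abs_norm_add_one_sub_norm_sub_one_le (w : ℂ) : |‖w + 1‖ - ‖w - 1‖| ≤ 2 := by
  have := abs_norm_sub_norm_le (w + 1) (w - 1)
  rwa [show w + 1 - (w - 1) = 2 by ring, Complex.norm_two] at this

theorem two_le_norm_sub_one_add_norm_add_one (w : ℂ) : 2 ≤ ‖w - 1‖ + ‖w + 1‖ := by
  have := norm_sub_le (w + 1) (w - 1)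
  rwa [show w + 1 - (w - 1) = 2 by ring, Complex.norm_two, add_comm] at this

theorem two_mul_norm_sq_add_two_mul_sub_one_le (w : ℂ) :
    2 * ‖w ^ 2 + 2 * w - 1‖ ≤
      ‖w ^ 2 + 1‖ ^ 2 + ‖w - 1‖ ^ 2 * (‖w - 1‖ ^ 2 + 4 * ‖w - 1‖ + 6) := by
  have key : 2 * (w ^ 2 + 2 * w - 1) =
      (w ^ 2 + 1) ^ 2 - (w - 1) ^ 2 * ((w - 1) ^ 2 + 4 * (w - 1) + 6) := by ring
  have h6 : ‖(w - 1) ^ 2 + 4 * (w - 1) + 6‖ ≤ ‖w - 1‖ ^ 2 + 4 * ‖w - 1‖ + 6 := by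
    refine (norm_add₃_le ..).trans ?_
    simp [norm_pow]
  calc 2 * ‖w ^ 2 + 2 * w - 1‖ = ‖2 * (w ^ 2 + 2 * w - 1)‖ := by simp
    _ ≤ ‖w ^ 2 + 1‖ ^ 2 + ‖w - 1‖ ^ 2 * ‖(w - 1) ^ 2 + 4 * (w - 1) + 6‖ := by
      rw [key]; exact (norm_sub_le _ _).trans_eq (by simp [norm_pow])
    _ ≤ _ := by gcongr

theorem norm_sq_add_two_mul_sub_one_le (w : ℂ) : ‖w ^ 2 + 2 * w - 1‖ ≤ ‖w + 1‖ ^ 2 + 2 := by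
  have := norm_sub_le ((w + 1) ^ 2) 2
  rwa [show (w + 1) ^ 2 - 2 = w ^ 2 + 2 * w - 1 by ring, norm_pow, Complex.norm_two] at this

theorem norm_pow_three_mul_norm_eq (hε₀ : 0 ≤ ε)
    (hw : (w - 1) ^ 3 * (w + 1) = -(ε * (w ^ 2 + 1) ^ 2)) :
    ‖w - 1‖ ^ 3 * ‖w + 1‖ = ε * ‖w ^ 2 + 1‖ ^ 2 := by
  simpa [norm_pow, abs_of_nonneg hε₀] using congrArg norm hw

theorem two_mul_one_sub_mul_norm_lt {q : ℝ} (hε₀ : 0 < ε) (hε : ε ≤ 1 / 1000)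
    (hq : q ≤ 1) (hεq : 675 * ε ^ 2 ≤ q ^ 3)
    (hw : (w - 1) ^ 3 * (w + 1) = -(ε * (w ^ 2 + 1) ^ 2)) :
    2 * (1 - q) * ‖w ^ 2 + 2 * w - 1‖ < ‖w ^ 2 + 1‖ ^ 2 := by
  have h := norm_pow_three_mul_norm_eq hε₀.le hw
  have hm := abs_norm_sq_add_one_sub_two_le w
  have hsu := abs_norm_add_one_sub_norm_sub_one_le w
  have h2 := two_le_norm_sub_one_add_norm_add_one w
  have hX₁ := two_mul_norm_sq_add_two_mul_sub_one_le w
  have hX₂ := norm_sq_add_two_mul_sub_one_le w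
  set s := ‖w - 1‖
  set u := ‖w + 1‖
  set m := ‖w ^ 2 + 1‖
  set X := ‖w ^ 2 + 2 * w - 1‖
  have hs : 0 ≤ s := norm_nonneg _
  have hu : 0 ≤ u := norm_nonneg _
  have hq₀ : 0 < q := by
    by_contra! hq'
    nlinarith [mul_nonpos_of_nonpos_of_nonneg hq' (sq_nonneg q), pow_pos hε₀ 2]
  have hq₄ : 4 * ε ≤ q := le_of_pow_le_pow_left₀ (by norm_num) hq₀.le (n := 3) (by nlinarith)
  have hsu₁ : s * u ≤ 1 := mul_le_one_of_pow_three_mul_eq hs (norm_nonneg _) hε₀.le hε h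
    (by linarith [(abs_le.1 hm).2]) (by linarith [(abs_le.1 hsu).2])
  rcases le_total s u with hle | hle
  · obtain ⟨hs3, hm8⟩ := pow_three_le_and_le_of_pow_three_mul_eq hs hu hε₀.le hε h hm
      (by linarith [(abs_le.1 hsu).2]) h2 hsu₁ hle
    have hs17 : s ≤ 17 / 100 :=
      le_of_pow_le_pow_left₀ (by norm_num) (by norm_num) (n := 3) (by norm_num; linarith)
    have hsq : s ^ 2 ≤ q / 3 :=
      le_of_pow_le_pow_left₀ (by positivity) (by linarith) (n := 3)
        (by nlinarith [pow_le_pow_left₀ (pow_nonneg hs 3) hs3 2])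
    have hR : s ^ 2 * (s ^ 2 + 4 * s + 6) ≤ 7 * q / 3 := by nlinarith
    calc 2 * (1 - q) * X = (1 - q) * (2 * X) := by ring
      _ ≤ (1 - q) * (m ^ 2 + 7 * q / 3) := mul_le_mul_of_nonneg_left (by linarith) (by linarith)
      _ < m ^ 2 := by nlinarith [pow_le_pow_left₀ (by norm_num) hm8 2]
  · obtain ⟨hu8, hsu4⟩ := le_and_mul_le_of_pow_three_mul_eq hu hε₀.le hε h hm
      (by linarith [(abs_le.1 hsu).1]) h2 hsu₁ hle
    have hm4 : 2 - 4 * ε ≤ m := by linarith [(abs_le.1 hm).1]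
    calc 2 * (1 - q) * X ≤ 2 * (1 - q) * (u ^ 2 + 2) := by gcongr
      _ < (2 - 4 * ε) ^ 2 := by nlinarith
      _ ≤ m ^ 2 := pow_le_pow_left₀ (by linarith) hm4 2

end NormEstimates

theorem norm_poleSum_lt_one_of_deriv_eq_zero {A p q : ℝ} (hA : 0 < A) (hp : 0 < p)
    (hq : q ≤ 1 / 2) (hAp : A / p ≤ 1 / 1000) (hAq : 675 * (A / p) ^ 2 ≤ q ^ 3) {z : ℂ}
    (h₁ : z ≠ p) (h₂ : z ≠ p * I) (h₃ : z ≠ -(p * I))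
    (hcrit : deriv (poleSum A (p * (1 - q) : ℝ) p) z = 0) :
    ‖poleSum A (p * (1 - q) : ℝ) p z‖ < 1 := by
  have hp' : (p : ℂ) ≠ 0 := by exact_mod_cast hp.ne'
  obtain ⟨w, rfl⟩ : ∃ w, z = p * w := ⟨z / p, (mul_div_cancel₀ z hp').symm⟩
  have hw₁ : w ≠ 1 := fun h => h₁ (by rw [h, mul_one])
  have hw₂ : w ^ 2 + 1 ≠ 0 := by
    rw [sq_add_one_eq_sub_I_mul_add_I]
    refine mul_ne_zero (fun h => h₂ ?_) (fun h => h₃ ?_)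
    · rw [sub_eq_zero.1 h]
    · rw [eq_neg_of_add_eq_zero_left h, mul_neg]
  set B := p * (1 - q)
  have hB : 0 < B := by nlinarith
  have hE := critical_eq_of_deriv_poleSum_eq_zero hp' hw₁ hw₂ hcrit
  rw [poleSum_apply_mul_of_critical_eq hp' hw₁ hw₂ hE]
  set ε := A / (2 * B)
  have hε₀ : 0 < ε := by positivity
  have hε : ε ≤ A / p := div_le_div_of_nonneg_left hA.le hp (by nlinarith)
  have hw : (w - 1) ^ 3 * (w + 1) = -(ε * (w ^ 2 + 1) ^ 2) := by
    have hεB : (ε : ℂ) * (2 * B) = A := by exact_mod_cast div_mul_cancel₀ A (by positivity)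
    refine mul_left_cancel₀ (by exact_mod_cast (by positivity : 2 * B ≠ 0) : (2 * B : ℂ) ≠ 0) ?_
    linear_combination hE + (w ^ 2 + 1) ^ 2 * hεB
  have hlt := two_mul_one_sub_mul_norm_lt (q := q) hε₀ (hε.trans hAp) (by linarith)
    (by nlinarith [pow_le_pow_left₀ hε₀.le hε 2]) hw
  rw [norm_div, div_lt_one (norm_pos_iff.2 (mul_ne_zero hp' (pow_ne_zero 2 hw₂)))]
  simp only [norm_mul, norm_pow, Complex.norm_real, Real.norm_eq_abs, Complex.norm_two,
    abs_of_pos hB, abs_of_pos hp]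
  nlinarith

theorem rpow_sub_one_le_half {p η : ℝ} (hη : η < 1) (hp : 2 ^ (1 - η)⁻¹ ≤ p) :
    p ^ (η - 1) ≤ 1 / 2 := by
  have h₀ : 0 ≤ (2 : ℝ) ^ (1 - η)⁻¹ := Real.rpow_nonneg zero_le_two _
  have h2 : (2 : ℝ) ≤ p ^ (1 - η) := by
    simpa [Real.rpow_inv_rpow zero_le_two (sub_ne_zero.2 hη.ne')] using
      Real.rpow_le_rpow h₀ hp (sub_nonneg.2 hη.le)
  rw [show η - 1 = -(1 - η) by ring, Real.rpow_neg (h₀.trans hp), one_div]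
  exact inv_anti₀ two_pos h2

theorem inv_le_rpow_sub_one_pow_three {p η : ℝ} (hη : 2 / 3 ≤ η) (hp : 1 ≤ p) :
    p⁻¹ ≤ (p ^ (η - 1)) ^ 3 := by
  rw [← Real.rpow_natCast, ← Real.rpow_mul (by positivity), ← Real.rpow_neg_one]
  exact Real.rpow_le_rpow_of_exponent_le hp (by push_cast; linarith)

/-- For `a > 0` and `η ∈ (2/3, 1)`, there exists `p₀ = p₀(a,η)` such
that for all `p > p₀`, every critical point `c` of
`R_p(z) = a/(z-p) + (p-p^η)/(z-ip) + (p-p^η)/(z+ip)` satisfies `|R_p(c)| < 1`. -/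
theorem counterexample_critical_values_small
    (a η : ℝ) (ha : 0 < a) (hη : η ∈ Set.Ioo (2/3 : ℝ) 1) :
    ∃ p₀ : ℝ, 1 ≤ p₀ ∧ ∀ p : ℝ, p₀ < p → ∀ c : ℂ,
      c ≠ (p : ℂ) → c ≠ (p : ℂ) * Complex.I → c ≠ -((p : ℂ) * Complex.I) →
      deriv (Rpfun a η p) c = 0 → ‖Rpfun a η p c‖ < 1 := by
  obtain ⟨hη₁, hη₂⟩ := hη
  have h2 : (0 : ℝ) < 2 ^ (1 - η)⁻¹ := by positivity
  refine ⟨2 ^ (1 - η)⁻¹ + 1000 * a + 675 * a ^ 2 + 1, by nlinarith, fun p hp c h₁ h₂ h₃ hcrit => ?_⟩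
  have hp₀ : 0 < p := by nlinarith
  have hb : p - p ^ η = p * (1 - p ^ (η - 1)) := by
    rw [Real.rpow_sub_one hp₀.ne']; field_simp
  rw [Rpfun_eq_poleSum, hb] at hcrit ⊢
  have hAq : 675 * (a / p) ^ 2 ≤ (p ^ (η - 1)) ^ 3 := by
    calc 675 * (a / p) ^ 2 = 675 * a ^ 2 / p * p⁻¹ := by field_simp
      _ ≤ 1 * p⁻¹ := by gcongr; rw [div_le_one hp₀]; linarith
      _ ≤ _ := by rw [one_mul]; exact inv_le_rpow_sub_one_pow_three hη₁.le (by nlinarith)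
  exact norm_poleSum_lt_one_of_deriv_eq_zero ha hp₀ (rpow_sub_one_le_half hη₂ (by nlinarith))
    (by rw [div_le_div_iff₀ hp₀ (by norm_num)]; nlinarith) hAq h₁ h₂ h₃ hcrit
end
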